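/- Let (X,T) and (Y,S) be Borel systems and t > 0. Suppose that for each s < t there is an s-slice X_s of (X,T) and a Borel injection φ_s : X_s → Y with φ_s ∘ T = S ∘ φ_s on X_s. Then there is a t-slice X_t of (X,T) and a Borel injection φ : X_t → Y with φ ∘ T = S ∘ φ on X_t. -/

import Mathlib

/-!
Common definitions: Borel systems, ergodic measures, Kolmogorov–Sinai entropy,
Gurevich entropy, embeddings/isomorphisms on full sets, universality, slices,
shift spaces (SFTs, sofic shifts, countable-state Markov shifts, β-shifts,
synchronized subshifts) and generic points.
-/

open MeasureTheory Filter Set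
open scoped ENNReal

/-- A Borel system: an uncountable standard Borel space together with a Borel
bijection whose inverse is also Borel (expressed via measurability of forward
images of measurable sets). -/
structure IsBorelSystem (X : Type*) [MeasurableSpace X] (T : X → X) : Prop where
  std : StandardBorelSpace X
  unc : Uncountable X
  bij : Function.Bijective T
  meas : Measurable T
  image_meas : ∀ s : Set X, MeasurableSet s → MeasurableSet (T '' s)

/-- Freeness: no periodic points.  (For a bijection `T`, `T^[n] x ≠ x` for all
`n > 0` is equivalent to `Tⁿ x ≠ x` for all integers `n ≠ 0`.) -/
def IsFreeSystem {X : Type*} (T : X → X) : Prop :=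
  ∀ (x : X) (n : ℕ), 0 < n → T^[n] x ≠ x

/-- The set of aperiodic (non-periodic) points of `T`. -/
def FreePart {X : Type*} (T : X → X) : Set X :=
  {x | ∀ n : ℕ, 0 < n → T^[n] x ≠ x}

/-- The ergodic `T`-invariant Borel probability measures. -/
def ErgodicMeasures {X : Type*} [MeasurableSpace X] (T : X → X) : Set (Measure X) :=
  {μ | IsProbabilityMeasure μ ∧ Ergodic T μ}

/-- The `T`-invariant Borel probability measures. -/
def InvariantProbMeasures {X : Type*} [MeasurableSpace X] (T : X → X) : Set (Measure X) :=
  {μ | IsProbabilityMeasure μ ∧ MeasurePreserving T μ μ}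

/-- A set is universally null if it is null for every ergodic invariant
probability measure. -/
def UniversallyNull {X : Type*} [MeasurableSpace X] (T : X → X) (A : Set X) : Prop :=
  ∀ μ ∈ ErgodicMeasures T, μ A = 0

/-- A set is full if its complement is universally null. -/
def IsFullSet {X : Type*} [MeasurableSpace X] (T : X → X) (A : Set X) : Prop :=
  UniversallyNull T Aᶜ

/-- The Shannon entropy of the distribution of the `(n+1)`-block process
generated by a finite measurable partition (coded by `f : X → Fin k`). -/
noncomputable def processEntropy {X : Type*} [MeasurableSpace X] (T : X → X) (μ : Measure X)
    {k : ℕ} (f : X → Fin k) (n : ℕ) : ℝ :=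
  ∑ a : Fin (n + 1) → Fin k,
    Real.negMulLog (μ {x | ∀ i : Fin (n + 1), f (T^[(i : ℕ)] x) = a i}).toReal

/-- Kolmogorov–Sinai entropy of `μ` under `T`: the supremum over finite
measurable partitions of the entropy rate of the generated process (the limit
equals the infimum by subadditivity). -/
noncomputable def ksEntropy {X : Type*} [MeasurableSpace X] (T : X → X) (μ : Measure X) : ℝ≥0∞ :=
  ⨆ (k : ℕ) (f : {f : X → Fin k // Measurable f}),
    ⨅ n : ℕ, ENNReal.ofReal (processEntropy T μ f.1 n / (n + 1))

/-- Gurevich entropy: the supremum of Kolmogorov–Sinai entropies over ergodic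
invariant probability measures (`⊥ = -∞` if there are none). -/
noncomputable def gurevichEntropy {X : Type*} [MeasurableSpace X] (T : X → X) : EReal :=
  ⨆ μ ∈ ErgodicMeasures T, ((ksEntropy T μ : ℝ≥0∞) : EReal)

/-- The supremum of Kolmogorov–Sinai entropies over all invariant probability
measures; for a compact system this is the topological entropy (variational
principle). -/
noncomputable def supInvEntropy {X : Type*} [MeasurableSpace X] (T : X → X) : EReal :=
  ⨆ μ ∈ InvariantProbMeasures T, ((ksEntropy T μ : ℝ≥0∞) : EReal)

/-- Restriction of a map to an invariant subset. -/
def restrictMap {X : Type*} (T : X → X) (A : Set X) (h : Set.MapsTo T A A) : A → A :=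
  fun x => ⟨T x.1, h x.2⟩

/-- `(X,T)` embeds into `(Y,S)` on a full set. -/
def EmbedsOnFullSet {X Y : Type*} [MeasurableSpace X] [MeasurableSpace Y]
    (T : X → X) (S : Y → Y) : Prop :=
  ∃ A : Set X, MeasurableSet A ∧ T ⁻¹' A = A ∧ IsFullSet T A ∧
    ∃ φ : X → Y, Set.InjOn φ A ∧ Measurable (A.restrict φ) ∧ ∀ x ∈ A, φ (T x) = S (φ x)

/-- `(X,T)` and `(Y,S)` are Borel isomorphic on full sets. -/
def IsomorphicOnFullSets {X Y : Type*} [MeasurableSpace X] [MeasurableSpace Y]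
    (T : X → X) (S : Y → Y) : Prop :=
  ∃ (A : Set X) (B : Set Y), MeasurableSet A ∧ MeasurableSet B ∧
    T ⁻¹' A = A ∧ S ⁻¹' B = B ∧ IsFullSet T A ∧ IsFullSet S B ∧
    ∃ φ : X → Y, Set.InjOn φ A ∧ φ '' A = B ∧ Measurable (A.restrict φ) ∧
      ∀ x ∈ A, φ (T x) = S (φ x)

/-- `t`-universality: every free Borel system of Gurevich entropy `< t` embeds
into the given system on a full set. -/
def IsUniversal {X : Type*} [MeasurableSpace X] (T : X → X) (t : ℝ) : Prop :=
  ∀ (Y : Type) [MeasurableSpace Y] (S : Y → Y),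
    IsBorelSystem Y S → IsFreeSystem S → gurevichEntropy S < (t : EReal) →
      EmbedsOnFullSet S T

/-- Strict `t`-universality: `t`-universal, free, and all ergodic invariant
measures have entropy `< t`. -/
def IsStrictlyUniversal {X : Type*} [MeasurableSpace X] (T : X → X) (t : ℝ) : Prop :=
  IsUniversal T t ∧ IsFreeSystem T ∧
    ∀ μ ∈ ErgodicMeasures T, ksEntropy T μ < ENNReal.ofReal t

/-- A `t`-slice: a Borel set of full measure for every ergodic invariant
measure of entropy `< t`, and null for every other ergodic invariant measure. -/
def IsSlice {X : Type*} [MeasurableSpace X] (T : X → X) (t : ℝ) (A : Set X) : Prop :=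
  MeasurableSet A ∧ ∀ μ ∈ ErgodicMeasures T,
    (ksEntropy T μ < ENNReal.ofReal t → μ A = 1) ∧
    (ENNReal.ofReal t ≤ ksEntropy T μ → μ A = 0)

/-- A free `t`-slice: a `t`-slice of the free part (ergodic measures of the
free part correspond to the ergodic measures of `T` giving the free part full
measure). -/
def IsFreeSlice {X : Type*} [MeasurableSpace X] (T : X → X) (t : ℝ) (A : Set X) : Prop :=
  MeasurableSet A ∧ A ⊆ FreePart T ∧
    ∀ μ ∈ ErgodicMeasures T, μ (FreePart T) = 1 →
      (ksEntropy T μ < ENNReal.ofReal t → μ A = 1) ∧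
      (ENNReal.ofReal t ≤ ksEntropy T μ → μ A = 0)

/-! ### Shift spaces -/

/-- The shift map on `ℤ → A`. -/
def fullShift (A : Type*) : (ℤ → A) → (ℤ → A) := fun x i => x (i + 1)

/-- Translation by `n` on `ℤ → A` (the `n`-th power of the shift). -/
def intShift (A : Type*) (n : ℤ) : (ℤ → A) → (ℤ → A) := fun x i => x (i + n)

lemma fullShift_injective (A : Type*) : Function.Injective (fullShift A) := by
  intro x y h
  funext i
  have := congrFun h (i - 1)
  simpa [fullShift] using this

lemma freePart_mapsTo {X : Type*} {T : X → X} (hT : Function.Injective T) :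
    Set.MapsTo T (FreePart T) (FreePart T) := by
  intro x hx n hn hfix
  refine hx n hn (hT ?_)
  rw [← Function.iterate_succ_apply, Function.iterate_succ_apply'] at hfix
  exact hfix

lemma restrictMap_injective {X : Type*} {T : X → X} (hT : Function.Injective T)
    {A : Set X} (h : Set.MapsTo T A A) : Function.Injective (restrictMap T A h) := by
  intro x y hxy
  exact Subtype.ext (hT (congrArg Subtype.val hxy))

/-- The free part of a system, as a system. -/
def freePartSystem {X : Type*} (T : X → X) (hT : Function.Injective T) :
    FreePart T → FreePart T :=
  restrictMap T (FreePart T) (freePart_mapsTo hT)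

/-- The space of bi-infinite edge paths in a directed graph with edge set `E`,
vertex set `V` and source/target maps `src`, `tgt`. -/
def EdgeShiftSpace {V E : Type*} (src tgt : E → V) : Set (ℤ → E) :=
  {x | ∀ i : ℤ, tgt (x i) = src (x (i + 1))}

lemma edgeShiftSpace_mapsTo {V E : Type*} (src tgt : E → V) :
    Set.MapsTo (fullShift E) (EdgeShiftSpace src tgt) (EdgeShiftSpace src tgt) :=
  fun _ hx i => hx (i + 1)

/-- The edge shift of a directed graph (SFT for finite graphs, countable-state
Markov shift for countable graphs). -/
def edgeShift {V E : Type*} (src tgt : E → V) :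
    EdgeShiftSpace src tgt → EdgeShiftSpace src tgt :=
  restrictMap (fullShift E) _ (edgeShiftSpace_mapsTo src tgt)

lemma edgeShift_injective {V E : Type*} (src tgt : E → V) :
    Function.Injective (edgeShift src tgt) :=
  restrictMap_injective (fullShift_injective E) _

/-- There is a directed path with `n+1` edges from `u` to `w`. -/
def HasPathLen {V E : Type*} (src tgt : E → V) (u w : V) (n : ℕ) : Prop :=
  ∃ p : ℕ → E, src (p 0) = u ∧ tgt (p n) = w ∧ ∀ i < n, tgt (p i) = src (p (i + 1))

/-- Strong connectivity: a directed path between every pair of vertices. -/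
def StronglyConnectedGraph {V E : Type*} (src tgt : E → V) : Prop :=
  ∀ u w : V, ∃ n : ℕ, HasPathLen src tgt u w n

/-- Aperiodicity: for some `N`, every vertex has cycles of every length `> N`. -/
def AperiodicGraph {V E : Type*} (src tgt : E → V) : Prop :=
  ∃ N : ℕ, ∀ u : V, ∀ n ≥ N, HasPathLen src tgt u u n

/-- A finite directed graph defining a mixing SFT: strongly connected and
aperiodic. -/
def IsMixingSFTGraph {v e : ℕ} (src tgt : Fin e → Fin v) : Prop :=
  StronglyConnectedGraph src tgt ∧ AperiodicGraph src tgt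

/-- The gcd of the cycle lengths is `1`. -/
def GcdOneCycles {V E : Type*} (src tgt : E → V) : Prop :=
  ∀ d : ℕ, (∀ (u : V) (n : ℕ), HasPathLen src tgt u u n → d ∣ (n + 1)) → d = 1

/-- `p` is the period of the graph: the gcd of the lengths of its cycles. -/
def HasPeriod {V E : Type*} (src tgt : E → V) (p : ℕ) : Prop :=
  (∀ (u : V) (n : ℕ), HasPathLen src tgt u u n → p ∣ (n + 1)) ∧
    ∀ q : ℕ, (∀ (u : V) (n : ℕ), HasPathLen src tgt u u n → q ∣ (n + 1)) → q ∣ p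

/-- First-return loops at `u` with `n+1` edges: paths from `u` to `u` not
visiting `u` in between. -/
def FirstReturnLoop {V E : Type*} (src tgt : E → V) (u : V) (n : ℕ) :
    Set (Fin (n + 1) → E) :=
  {p | src (p 0) = u ∧ tgt (p (Fin.last n)) = u ∧
    (∀ i : Fin n, tgt (p i.castSucc) = src (p i.succ)) ∧
    ∀ i : Fin (n + 1), i ≠ 0 → src (p i) ≠ u}

/-- `Σ fₙ λ⁻ⁿ`, where `fₙ` is the number of first-return loops of length `n`. -/
noncomputable def firstReturnSeries {V E : Type*} (src tgt : E → V) (u : V) (lam : ℝ) : ℝ≥0∞ :=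
  ∑' n : ℕ, (∑' _p : FirstReturnLoop src tgt u n, (1 : ℝ≥0∞)) *
    ENNReal.ofReal ((lam ^ (n + 1))⁻¹)

/-- `Σ n fₙ λ⁻ⁿ`. -/
noncomputable def firstReturnWeightedSeries {V E : Type*} (src tgt : E → V) (u : V)
    (lam : ℝ) : ℝ≥0∞ :=
  ∑' n : ℕ, ((n : ℝ≥0∞) + 1) * (∑' _p : FirstReturnLoop src tgt u n, (1 : ℝ≥0∞)) *
    ENNReal.ofReal ((lam ^ (n + 1))⁻¹)

/-- Recurrence of a Markov shift of Gurevich entropy `log lam`, at vertex `u`. -/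
def IsRecurrentMarkov {V E : Type*} (src tgt : E → V) (u : V) (lam : ℝ) : Prop :=
  firstReturnSeries src tgt u lam = 1

/-- Positive recurrence of a Markov shift of Gurevich entropy `log lam`. -/
def IsPositiveRecurrentMarkov {V E : Type*} (src tgt : E → V) (u : V) (lam : ℝ) : Prop :=
  firstReturnSeries src tgt u lam = 1 ∧ firstReturnWeightedSeries src tgt u lam ≠ ⊤

/-! ### Subshifts, words -/

/-- The word `b` appears in some point of `Z`. -/
def wordAppearsIn {A : Type*} (Z : Set (ℤ → A)) {k : ℕ} (b : Fin k → A) : Prop :=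
  ∃ z ∈ Z, ∃ i : ℤ, ∀ j : Fin k, z (i + ((j : ℕ) : ℤ)) = b j

/-- Topological mixing of a subshift, in terms of words: any two admissible
words can be glued with every sufficiently large gap. -/
def IsMixingSubshiftSet {A : Type*} (Z : Set (ℤ → A)) : Prop :=
  ∀ (k l : ℕ) (b : Fin k → A) (c : Fin l → A),
    wordAppearsIn Z b → wordAppearsIn Z c →
      ∃ N : ℕ, ∀ n : ℕ, N ≤ n → ∃ z ∈ Z, ∃ i : ℤ,
        (∀ j : Fin k, z (i + ((j : ℕ) : ℤ)) = b j) ∧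
        (∀ j : Fin l, z (i + (n : ℤ) + ((j : ℕ) : ℤ)) = c j)

/-- Topological transitivity of a subshift, in terms of words. -/
def IsTopTransitiveSubshift {A : Type*} (Z : Set (ℤ → A)) : Prop :=
  ∀ (k l : ℕ) (b : Fin k → A) (c : Fin l → A),
    wordAppearsIn Z b → wordAppearsIn Z c →
      ∃ z ∈ Z, ∃ i : ℤ, ∃ n : ℕ,
        (∀ j : Fin k, z (i + ((j : ℕ) : ℤ)) = b j) ∧
        (∀ j : Fin l, z (i + (k : ℤ) + (n : ℤ) + ((j : ℕ) : ℤ)) = c j)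

/-- `Z` is a (two-sided) subshift: invariant under the shift and its inverse,
and closed (every point all of whose windows are matched by points of `Z`
belongs to `Z`). -/
def IsSubshiftSet {A : Type*} (Z : Set (ℤ → A)) : Prop :=
  Set.MapsTo (fullShift A) Z Z ∧ Set.MapsTo (intShift A (-1)) Z Z ∧
    ∀ y : ℤ → A, (∀ k : ℕ, ∃ z ∈ Z, ∀ j : ℤ, |j| ≤ (k : ℤ) → z j = y j) → y ∈ Z

/-- A synchronizing word for the subshift `Z`. -/
def HasSynchronizingWord {A : Type*} (Z : Set (ℤ → A)) : Prop :=
  ∃ (k : ℕ) (w : Fin k → A), wordAppearsIn Z w ∧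
    ∀ (m n : ℕ) (u : Fin m → A) (v : Fin n → A),
      wordAppearsIn Z (Fin.append u w) → wordAppearsIn Z (Fin.append w v) →
        wordAppearsIn Z (Fin.append (Fin.append u w) v)

/-- The sofic shift presented by a labeled finite graph: bi-infinite label
sequences of edge paths. -/
def SoficSpace {a v e : ℕ} (src tgt : Fin e → Fin v) (lab : Fin e → Fin a) :
    Set (ℤ → Fin a) :=
  {y | ∃ x ∈ EdgeShiftSpace src tgt, ∀ i : ℤ, lab (x i) = y i}

lemma soficSpace_mapsTo {a v e : ℕ} (src tgt : Fin e → Fin v) (lab : Fin e → Fin a) :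
    Set.MapsTo (fullShift (Fin a)) (SoficSpace src tgt lab) (SoficSpace src tgt lab) := by
  rintro y ⟨x, hx, hl⟩
  exact ⟨fullShift (Fin e) x, edgeShiftSpace_mapsTo src tgt hx, fun i => hl (i + 1)⟩

/-- The shift map on a sofic shift. -/
def soficShift {a v e : ℕ} (src tgt : Fin e → Fin v) (lab : Fin e → Fin a) :
    SoficSpace src tgt lab → SoficSpace src tgt lab :=
  restrictMap (fullShift (Fin a)) _ (soficSpace_mapsTo src tgt lab)

lemma soficShift_injective {a v e : ℕ} (src tgt : Fin e → Fin v) (lab : Fin e → Fin a) :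
    Function.Injective (soficShift src tgt lab) :=
  restrictMap_injective (fullShift_injective (Fin a)) _

/-! ### β-shifts -/

/-- The β-transformation `y ↦ βy mod 1`. -/
noncomputable def betaMap (β : ℝ) : ℝ → ℝ := fun y => Int.fract (β * y)

/-- The `n`-th digit of the greedy β-expansion of `x ∈ [0,1)`. -/
noncomputable def betaDigit (β : ℝ) (x : ℝ) (n : ℕ) : ℕ :=
  (⌊β * (betaMap β)^[n] x⌋).toNat

/-- The natural extension of the β-shift: bi-infinite sequences all of whose
finite windows are admissible for the (one-sided) β-shift, i.e. occur as
initial segments of greedy β-expansions. -/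
def BetaNaturalExtension (β : ℝ) : Set (ℤ → ℕ) :=
  {y | ∀ (i : ℤ) (k : ℕ), ∃ x ∈ Set.Ico (0 : ℝ) 1,
    ∀ j < k, betaDigit β x j = y (i + (j : ℤ))}

lemma betaNaturalExtension_mapsTo (β : ℝ) :
    Set.MapsTo (fullShift ℕ) (BetaNaturalExtension β) (BetaNaturalExtension β) := by
  intro y hy i k
  obtain ⟨x, hx, h⟩ := hy (i + 1) k
  refine ⟨x, hx, fun j hj => ?_⟩
  have := h j hj
  simpa [fullShift, add_assoc, add_comm, add_left_comm] using this

/-- The natural extension of the β-shift, as a dynamical system. -/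
noncomputable def betaExtShift (β : ℝ) :
    BetaNaturalExtension β → BetaNaturalExtension β :=
  restrictMap (fullShift ℕ) _ (betaNaturalExtension_mapsTo β)

/-! ### Generic points -/

/-- The basic cylinder sets of `ℕ^ℤ`. -/
def cylinderSets : Set (Set (ℤ → ℕ)) := {C | ∃ (i : ℤ) (a : ℕ), C = {x | x i = a}}

/-- The algebra of sets generated by the cylinder sets. -/
def cylinderAlgebra : Set (Set (ℤ → ℕ)) := MeasureTheory.generateSetAlgebra cylinderSets

/-- `x` is a generic point for `μ`: the two-sided ergodic averages of every set
in the cylinder algebra converge to its measure. -/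
def IsGenericPointFor (μ : Measure (ℤ → ℕ)) (x : ℤ → ℕ) : Prop :=
  ∀ C ∈ cylinderAlgebra,
    Filter.Tendsto
      (fun N : ℕ => (2 * (N : ℝ) + 1)⁻¹ *
        ∑ n ∈ Finset.Icc (-(N : ℤ)) (N : ℤ), C.indicator (fun _ => (1 : ℝ)) (intShift ℕ n x))
      Filter.atTop (nhds (μ C).toReal)

/-- The set of points generic for `μ`. -/
def genericSet (μ : Measure (ℤ → ℕ)) : Set (ℤ → ℕ) := {x | IsGenericPointFor μ x}

/-! ### Blocks and finitary codes -/

/-- A finite block over the alphabet `Fin e`, of odd length `2k+1`. -/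
def EdgeBlock (e : ℕ) : Type := Σ k : ℕ, Fin (2 * k + 1) → Fin e

/-- The block `b` matches `y` on the window of radius `b.1` centered at `i`. -/
def blockMatchesAt {e : ℕ} (y : ℤ → Fin e) (i : ℤ) (b : EdgeBlock e) : Prop :=
  ∀ j : Fin (2 * b.1 + 1), b.2 j = y (i + ((j : ℕ) : ℤ) - (b.1 : ℤ))

/-!
Choose levels `s n ↑ t` with `s n`-slices `A n` embedded by `φ n`, and shrink each `A n` to its
largest invariant subset `E n`, which every ergodic measure carried by `A n` still charges fully.
Glue the `φ n` giving priority to smaller indices, in the domain and in the image. An ergodic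
measure `μ` of entropy `h < t` is carried by `E n` for the least `n` with `h < s n`. Its image
under `φ n` cannot charge `φ m '' E m` for `m < n`: by ergodicity it would be carried by it, and
pulling it back through `φ m` (a Borel isomorphism onto its image by Lusin–Souslin) would give an
ergodic measure carried by `A m` of entropy `h ≥ s m`, which an `s m`-slice excludes.
-/

open Function

section Transfer

variable {X Z : Type*} [MeasurableSpace X] {T : X → X} {R : Z → Z} {μ : Measure X} {π : X → Z}

theorem ae_iterate_semiconj (hT : Measure.QuasiMeasurePreserving T μ μ)
    (h : ∀ᵐ x ∂μ, π (T x) = R (π x)) (n : ℕ) : ∀ᵐ x ∂μ, π (T^[n] x) = R^[n] (π x) := by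
  induction n with
  | zero => exact ae_of_all _ fun _ => rfl
  | succ n ih =>
    filter_upwards [hT.ae ih, h] with x hn hx
    rw [iterate_succ_apply, iterate_succ_apply, hn, hx]

variable [MeasurableSpace Z]

theorem processEntropy_map (hT : Measure.QuasiMeasurePreserving T μ μ) (hR : Measurable R)
    (hπ : Measurable π) (h : ∀ᵐ x ∂μ, π (T x) = R (π x)) {k : ℕ} {f : Z → Fin k}
    (hf : Measurable f) (n : ℕ) :
    processEntropy R (μ.map π) f n = processEntropy T μ (f ∘ π) n := by
  refine Finset.sum_congr rfl fun a _ => ?_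
  have hcyl : MeasurableSet {z | ∀ i : Fin (n + 1), f (R^[(i : ℕ)] z) = a i} := by
    simp only [ofPred_forall]
    exact .iInter fun i => hf.comp (hR.iterate _) (measurableSet_singleton _)
  rw [Measure.map_apply hπ hcyl]
  congr 2
  refine measure_congr ?_
  filter_upwards [ae_all_iff.2 fun i : Fin (n + 1) => ae_iterate_semiconj hT h i] with x hx
  change (∀ i : Fin (n + 1), f (R^[i] (π x)) = a i) = ∀ i : Fin (n + 1), f (π (T^[i] x)) = a i
  simp only [hx]

theorem ksEntropy_map_le (hT : Measure.QuasiMeasurePreserving T μ μ) (hR : Measurable R)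
    (hπ : Measurable π) (h : ∀ᵐ x ∂μ, π (T x) = R (π x)) :
    ksEntropy R (μ.map π) ≤ ksEntropy T μ :=
  iSup₂_le fun k f => le_iSup₂_of_le k ⟨f.1 ∘ π, f.2.comp hπ⟩ <| le_of_eq <| by
    simp_rw [processEntropy_map hT hR hπ h f.2]

theorem measurePreserving_map_of_ae_semiconj (hT : MeasurePreserving T μ μ) (hR : Measurable R)
    (hπ : Measurable π) (h : ∀ᵐ x ∂μ, π (T x) = R (π x)) :
    MeasurePreserving R (μ.map π) (μ.map π) := by
  refine ⟨hR, ?_⟩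
  calc (μ.map π).map R = μ.map (R ∘ π) := Measure.map_map hR hπ
    _ = μ.map (π ∘ T) := Measure.map_congr (h.mono fun _ hx => hx.symm)
    _ = (μ.map T).map π := (Measure.map_map hπ hT.measurable).symm
    _ = μ.map π := by rw [hT.map_eq]

theorem Ergodic.map_of_ae_semiconj (hμ : Ergodic T μ) (hR : Measurable R) (hπ : Measurable π)
    (h : ∀ᵐ x ∂μ, π (T x) = R (π x)) : Ergodic R (μ.map π) := by
  refine ⟨measurePreserving_map_of_ae_semiconj hμ.toMeasurePreserving hR hπ h, ⟨fun s hs hRs => ?_⟩⟩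
  rw [← (hπ.measurePreserving μ).aeconst_preimage hs.nullMeasurableSet]
  refine hμ.quasiErgodic.aeconst_set₀ (hπ hs).nullMeasurableSet ?_
  filter_upwards [h] with x hx
  change (π (T x) ∈ s) = (π x ∈ s)
  rw [hx, ← mem_preimage, hRs]

theorem map_mem_ergodicMeasures_and_ksEntropy_eq [MeasurableEq X] (hμ : μ ∈ ErgodicMeasures T)
    (hR : Measurable R) (hπ : Measurable π) {ρ : Z → X} (hρ : Measurable ρ)
    (h : ∀ᵐ x ∂μ, π (T x) = R (π x)) (hρπ : ∀ᵐ x ∂μ, ρ (π x) = x) :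
    μ.map π ∈ ErgodicMeasures R ∧ ksEntropy R (μ.map π) = ksEntropy T μ := by
  obtain ⟨hprob, herg⟩ := hμ
  have hT := herg.toMeasurePreserving
  refine ⟨⟨Measure.isProbabilityMeasure_map hπ.aemeasurable, herg.map_of_ae_semiconj hR hπ h⟩,
    le_antisymm (ksEntropy_map_le hT.quasiMeasurePreserving hR hπ h) ?_⟩
  have hρR : ∀ᵐ z ∂μ.map π, ρ (R z) = T (ρ z) := by
    rw [ae_map_iff hπ.aemeasurable (measurableSet_eq_fun (hρ.comp hR) (hT.measurable.comp hρ) :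
      MeasurableSet {z | ρ (R z) = T (ρ z)})]
    filter_upwards [h, hρπ, hT.quasiMeasurePreserving.ae hρπ] with x hx hρx hρTx
    rw [← hx, hρTx, hρx]
  have hμρ : (μ.map π).map ρ = μ := by
    rw [Measure.map_map hρ hπ, Measure.map_congr (f := ρ ∘ π) (g := id) hρπ, Measure.map_id]
  calc ksEntropy T μ = ksEntropy T ((μ.map π).map ρ) := by rw [hμρ]
    _ ≤ ksEntropy R (μ.map π) :=
      ksEntropy_map_le (measurePreserving_map_of_ae_semiconj hT hR hπ h).quasiMeasurePreserving
        hT.measurable hρ hρR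

end Transfer

section OrbitCore

variable {X : Type*} [MeasurableSpace X] (e : X ≃ᵐ X) {A : Set X}

theorem MeasurableEquiv.exists_coe_zpow_eq_iterate (k : ℤ) :
    ∃ n : ℕ, ⇑(e.toEquiv ^ k) = (⇑e)^[n] ∨ ⇑(e.toEquiv ^ k) = (⇑e.symm)^[n] := by
  obtain ⟨n, rfl | rfl⟩ := k.eq_nat_or_neg
  · exact ⟨n, Or.inl (by rw [zpow_natCast, ← Equiv.Perm.iterate_eq_pow]; rfl)⟩
  · exact ⟨n, Or.inr (by rw [zpow_neg, zpow_natCast, ← inv_pow, ← Equiv.Perm.iterate_eq_pow]; rfl)⟩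

def orbitCore (A : Set X) : Set X := ⋂ k : ℤ, ⇑(e.toEquiv ^ k) ⁻¹' A

theorem orbitCore_subset : orbitCore e A ⊆ A := fun x hx => by
  simpa using mem_iInter.1 hx 0

theorem preimage_orbitCore : e ⁻¹' orbitCore e A = orbitCore e A := by
  ext x
  simp only [orbitCore, mem_preimage, mem_iInter]
  have hshift : ∀ k : ℤ, (e.toEquiv ^ k) (e x) = (e.toEquiv ^ (k + 1)) x := fun k => by
    rw [zpow_add_one, Equiv.Perm.mul_apply]; rfl
  simp only [hshift]
  exact ⟨fun h k => by simpa using h (k - 1), fun h k => h (k + 1)⟩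

theorem mapsTo_orbitCore : MapsTo e (orbitCore e A) (orbitCore e A) := fun x hx => by
  rwa [← preimage_orbitCore e] at hx

theorem MeasurableSet.orbitCore (hA : MeasurableSet A) : MeasurableSet (orbitCore e A) := by
  refine .iInter fun k => ?_
  obtain ⟨n, h | h⟩ := e.exists_coe_zpow_eq_iterate k <;> rw [h]
  exacts [e.measurable.iterate n hA, e.symm.measurable.iterate n hA]

theorem measure_orbitCore_eq_one {μ : Measure X} [IsProbabilityMeasure μ]
    (hμ : MeasurePreserving e μ μ) (hA : MeasurableSet A) (h : μ A = 1) :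
    μ (orbitCore e A) = 1 := by
  rw [← mem_ae_iff_prob_eq_one (hA.orbitCore e)]
  rw [← mem_ae_iff_prob_eq_one hA] at h
  refine countable_iInter_mem.2 fun k => ?_
  obtain ⟨n, hk | hk⟩ := e.exists_coe_zpow_eq_iterate k <;> rw [hk]
  exacts [(hμ.iterate n).quasiMeasurePreserving.tendsto_ae h,
    ((hμ.symm e).iterate n).quasiMeasurePreserving.tendsto_ae h]

end OrbitCore

section MeasurableSelection

variable {X Y : Type*} [MeasurableSpace X] [MeasurableSpace Y] {A : Set X} {φ : X → Y}

theorem exists_measurable_eqOn_of_measurable_domRestrict [Nonempty Y] (hA : MeasurableSet A)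
    (hφ : Measurable (A.domRestrict φ)) : ∃ Φ : X → Y, Measurable Φ ∧ EqOn Φ φ A := by
  obtain ⟨Φ, hΦ, hΦφ⟩ :=
    (MeasurableEmbedding.subtype_coe hA).exists_measurable_extend hφ fun _ => inferInstance
  exact ⟨Φ, hΦ, fun x hx => congrFun hΦφ ⟨x, hx⟩⟩

theorem exists_measurable_leftInvOn [StandardBorelSpace X] [MeasurableSpace.CountablySeparated Y]
    [Nonempty X] (hA : MeasurableSet A) (hφ : Measurable φ) (hinj : InjOn φ A) :
    ∃ g : Y → X, Measurable g ∧ LeftInvOn g φ A := by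
  have := hA.standardBorel
  have hemb : MeasurableEmbedding (A.domRestrict φ) :=
    (hφ.comp measurable_subtype_coe).measurableEmbedding (injOn_iff_injective.1 hinj)
  obtain ⟨g, hg, hgφ⟩ := hemb.exists_measurable_extend measurable_subtype_coe fun _ => inferInstance
  exact ⟨g, hg, fun x hx => congrFun hgφ ⟨x, hx⟩⟩

end MeasurableSelection

theorem Set.preimage_disjointed {α β : Type*} (f : α → β) (s : ℕ → Set β) (n : ℕ) :
    f ⁻¹' disjointed s n = disjointed (fun m => f ⁻¹' s m) n := by
  simp only [disjointed_eq_inter_compl, preimage_inter, preimage_iInter, preimage_compl]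

theorem measure_disjointed_of_null {α : Type*} [MeasurableSpace α] {μ : Measure α}
    {s : ℕ → Set α} {n : ℕ} (h : ∀ m < n, μ (s m) = 0) : μ (disjointed s n) = μ (s n) := by
  rw [disjointed_eq_inter_compl]
  refine measure_inter_conull ?_
  simp only [compl_iInter, compl_compl]
  exact measure_iUnion_null fun m => measure_iUnion_null (h m)

section EquivariantEmbedding

variable {X Y : Type*} [MeasurableSpace X] [MeasurableSpace Y] {T : X → X} {S : Y → Y}

structure IsEquivariantEmbeddingOn (T : X → X) (S : Y → Y) (E : Set X) (Φ : X → Y) : Prop where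
  measurableSet : MeasurableSet E
  preimage_eq : T ⁻¹' E = E
  measurable : Measurable Φ
  injOn : InjOn Φ E
  semiconj : ∀ x ∈ E, Φ (T x) = S (Φ x)

namespace IsEquivariantEmbeddingOn

variable {E : Set X} {Φ : X → Y}

theorem mapsTo (h : IsEquivariantEmbeddingOn T S E Φ) : MapsTo T E E := fun x hx => by
  rwa [← h.preimage_eq] at hx

theorem preimage_image (h : IsEquivariantEmbeddingOn T S E Φ) (hT : Surjective T)
    (hS : Injective S) : S ⁻¹' (Φ '' E) = Φ '' E := by
  ext y
  constructor
  · rintro ⟨x, hx, hxy⟩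
    obtain ⟨x, rfl⟩ := hT x
    have hx' : x ∈ E := by rwa [← h.preimage_eq]
    exact ⟨x, hx', hS (by rw [← h.semiconj x hx', hxy])⟩
  · rintro ⟨x, hx, rfl⟩
    exact ⟨T x, h.mapsTo hx, h.semiconj x hx⟩

theorem measurableSet_image [StandardBorelSpace X] [MeasurableSpace.CountablySeparated Y]
    (h : IsEquivariantEmbeddingOn T S E Φ) : MeasurableSet (Φ '' E) :=
  h.measurableSet.image_of_measurable_injOn h.measurable h.injOn

theorem map_mem_ergodicMeasures [StandardBorelSpace X] [MeasurableSpace.CountablySeparated Y]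
    (h : IsEquivariantEmbeddingOn T S E Φ) (hS : Measurable S) {μ : Measure X}
    (hμ : μ ∈ ErgodicMeasures T) (hE : μ E = 1) :
    μ.map Φ ∈ ErgodicMeasures S ∧ ksEntropy S (μ.map Φ) = ksEntropy T μ := by
  have := hμ.1
  obtain ⟨x₀, -⟩ := nonempty_of_measure_ne_zero (μ := μ) (s := E) (by simp [hE])
  have : Nonempty X := ⟨x₀⟩
  obtain ⟨g, hg, hgΦ⟩ := exists_measurable_leftInvOn h.measurableSet h.measurable h.injOn
  have hEae : ∀ᵐ x ∂μ, x ∈ E := (mem_ae_iff_prob_eq_one h.measurableSet).2 hE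
  exact map_mem_ergodicMeasures_and_ksEntropy_eq hμ hS h.measurable hg (hEae.mono h.semiconj)
    (hEae.mono fun _ hx => hgΦ hx)

theorem exists_mem_ergodicMeasures_of_image [StandardBorelSpace X] [StandardBorelSpace Y]
    (h : IsEquivariantEmbeddingOn T S E Φ) (hT : Measurable T) {ν : Measure Y}
    (hν : ν ∈ ErgodicMeasures S) (hD : ν (Φ '' E) = 1) :
    ∃ μ ∈ ErgodicMeasures T, μ E = 1 ∧ ksEntropy T μ = ksEntropy S ν := by
  have := hν.1
  obtain ⟨-, ⟨x₀, -, -⟩⟩ := nonempty_of_measure_ne_zero (μ := ν) (s := Φ '' E) (by simp [hD])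
  have : Nonempty X := ⟨x₀⟩
  obtain ⟨g, hg, hgΦ⟩ := exists_measurable_leftInvOn h.measurableSet h.measurable h.injOn
  have hDae : ∀ᵐ y ∂ν, y ∈ Φ '' E := (mem_ae_iff_prob_eq_one h.measurableSet_image).2 hD
  obtain ⟨hμ, hent⟩ := map_mem_ergodicMeasures_and_ksEntropy_eq hν hT hg h.measurable
    (hDae.mono fun _ ⟨x, hx, hxy⟩ => by
      rw [← hxy, ← h.semiconj x hx, hgΦ (h.mapsTo hx), hgΦ hx])
    (hDae.mono fun _ ⟨x, hx, hxy⟩ => by rw [← hxy, hgΦ hx])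
  have := hμ.1
  refine ⟨ν.map g, hμ, le_antisymm prob_le_one ?_, hent⟩
  rw [Measure.map_apply hg h.measurableSet, ← hD]
  exact measure_mono fun _ ⟨x, hx, hxy⟩ => by rwa [← hxy, mem_preimage, hgΦ hx]

end IsEquivariantEmbeddingOn

theorem isEquivariantEmbeddingOn_orbitCore (e : X ≃ᵐ X) {A : Set X} {φ Φ : X → Y}
    (hA : MeasurableSet A) (hΦ : Measurable Φ) (hΦφ : EqOn Φ φ A) (hinj : InjOn φ A)
    (hφS : ∀ x ∈ A, φ (e x) = S (φ x)) : IsEquivariantEmbeddingOn e S (orbitCore e A) Φ where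
  measurableSet := hA.orbitCore e
  preimage_eq := preimage_orbitCore e
  measurable := hΦ
  injOn := (hinj.congr hΦφ.symm).mono (orbitCore_subset e)
  semiconj x hx := by
    have hxA := orbitCore_subset e hx
    rw [hΦφ (orbitCore_subset e (mapsTo_orbitCore e hx)), hΦφ hxA, hφS x hxA]

end EquivariantEmbedding

section EmbeddingPieces

variable {X Y : Type*} {T : X → X} {S : Y → Y} (E : ℕ → Set X) (Φ : ℕ → X → Y)

/-- Gluing the `Φ n` along these pieces is injective: the `Φ n`-image of the `n`-th piece
avoids the images `Φ m '' E m`, `m < n`. -/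
def embeddingPieces : ℕ → Set X :=
  disjointed fun n => E n ∩ Φ n ⁻¹' disjointed (fun m => Φ m '' E m) n

variable {E Φ}

theorem embeddingPieces_subset (n : ℕ) : embeddingPieces E Φ n ⊆ E n :=
  (disjointed_subset _ n).trans inter_subset_left

theorem mapsTo_embeddingPieces (n : ℕ) :
    MapsTo (Φ n) (embeddingPieces E Φ n) (disjointed (fun m => Φ m '' E m) n) :=
  fun _ hx => (disjointed_subset _ n hx).2

theorem pairwise_disjoint_embeddingPieces : Pairwise (Disjoint on embeddingPieces E Φ) :=
  disjoint_disjointed _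

variable [MeasurableSpace X] [MeasurableSpace Y]

theorem measurableSet_embeddingPieces [StandardBorelSpace X]
    [MeasurableSpace.CountablySeparated Y] (h : ∀ n, IsEquivariantEmbeddingOn T S (E n) (Φ n))
    (n : ℕ) : MeasurableSet (embeddingPieces E Φ n) :=
  .disjointed (fun k => (h k).measurableSet.inter <|
    (h k).measurable <| .disjointed (fun m => (h m).measurableSet_image) k) n

theorem preimage_embeddingPieces (hT : Surjective T) (hS : Injective S)
    (h : ∀ n, IsEquivariantEmbeddingOn T S (E n) (Φ n)) (n : ℕ) :
    T ⁻¹' embeddingPieces E Φ n = embeddingPieces E Φ n := by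
  have hpiece : ∀ k, T ⁻¹' (E k ∩ Φ k ⁻¹' disjointed (fun m => Φ m '' E m) k) =
      E k ∩ Φ k ⁻¹' disjointed (fun m => Φ m '' E m) k := fun k => by
    ext x
    rw [preimage_inter, mem_inter_iff, (h k).preimage_eq, mem_inter_iff]
    refine and_congr_right fun hx => ?_
    rw [mem_preimage, mem_preimage, (h k).semiconj x hx, ← mem_preimage (f := S),
      preimage_disjointed]
    simp only [(h _).preimage_image hT hS]
    exact Iff.rfl
  rw [embeddingPieces, preimage_disjointed]
  simp only [hpiece]

theorem exists_measurable_injOn_iUnion_embeddingPieces [StandardBorelSpace X]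
    [MeasurableSpace.CountablySeparated Y] (hT : Surjective T) (hS : Injective S)
    (h : ∀ n, IsEquivariantEmbeddingOn T S (E n) (Φ n)) :
    ∃ φ : X → Y, Measurable φ ∧ InjOn φ (⋃ n, embeddingPieces E Φ n) ∧
      ∀ x ∈ ⋃ n, embeddingPieces E Φ n, φ (T x) = S (φ x) := by
  obtain ⟨φ, hφ, hφΦ⟩ := exists_measurable_piecewise (embeddingPieces E Φ)
    (measurableSet_embeddingPieces h) Φ (fun n => (h n).measurable) fun i j hij x hx =>
      absurd hx.2 (disjoint_left.1 (pairwise_disjoint_embeddingPieces hij) hx.1)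
  refine ⟨φ, hφ, ?_, ?_⟩
  · intro x hx y hy hxy
    obtain ⟨n, hxn⟩ := mem_iUnion.1 hx
    obtain ⟨m, hym⟩ := mem_iUnion.1 hy
    rw [hφΦ n hxn, hφΦ m hym] at hxy
    obtain rfl | hnm := eq_or_ne n m
    · exact (h n).injOn (embeddingPieces_subset n hxn) (embeddingPieces_subset n hym) hxy
    · exact absurd hxy <| (disjoint_disjointed _ hnm).ne_of_mem
        (mapsTo_embeddingPieces n hxn) (mapsTo_embeddingPieces m hym)
  · intro x hx
    obtain ⟨n, hxn⟩ := mem_iUnion.1 hx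
    have hTxn : T x ∈ embeddingPieces E Φ n := by rwa [← preimage_embeddingPieces hT hS h n] at hxn
    rw [hφΦ n hTxn, hφΦ n hxn, (h n).semiconj x (embeddingPieces_subset n hxn)]

/-- If the pieces missed `μ`, then `Φ n` followed by the inverse of some `Φ m`, `m < n`, would
transport `μ` to an ergodic measure carried by `E m` with the same entropy. -/
theorem measure_iUnion_embeddingPieces_eq_one [StandardBorelSpace X] [StandardBorelSpace Y]
    (hT : Measurable T) (hTs : Surjective T) (hS : Measurable S) (hSi : Injective S)
    (h : ∀ n, IsEquivariantEmbeddingOn T S (E n) (Φ n)) {μ : Measure X}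
    (hμ : μ ∈ ErgodicMeasures T) {n : ℕ} (hn : μ (E n) = 1)
    (hlow : ∀ m < n, ∀ μ' ∈ ErgodicMeasures T, μ' (E m) = 1 → ksEntropy T μ' ≠ ksEntropy T μ) :
    μ (⋃ k, embeddingPieces E Φ k) = 1 := by
  have := hμ.1
  obtain ⟨hν, hνent⟩ := (h n).map_mem_ergodicMeasures hS hμ hn
  have := hν.1
  have hD : ∀ m < n, μ.map (Φ n) (Φ m '' E m) = 0 := fun m hm =>
    (hν.2.prob_eq_zero_or_one (h m).measurableSet_image ((h m).preimage_image hTs hSi)).elim id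
      fun hD => by
        obtain ⟨μ', hμ', hμ'E, hμ'ent⟩ := (h m).exists_mem_ergodicMeasures_of_image hT hν hD
        exact absurd (hμ'ent.trans hνent) (hlow m hm μ' hμ' hμ'E)
  have hDn : μ.map (Φ n) (Φ n '' E n) = 1 := by
    rw [Measure.map_apply (h n).measurable (h n).measurableSet_image]
    exact le_antisymm prob_le_one (hn ▸ measure_mono (subset_preimage_image _ _))
  have hE : ∀ m < n, μ (E m) = 0 := fun m hm =>
    (hμ.2.prob_eq_zero_or_one (h m).measurableSet (h m).preimage_eq).resolve_right
      fun hE => hlow m hm μ hμ hE rfl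
  have hC : μ (E n ∩ Φ n ⁻¹' disjointed (fun m => Φ m '' E m) n) = 1 := by
    have hDmeas : MeasurableSet (disjointed (fun m => Φ m '' E m) n) :=
      .disjointed (fun m => (h m).measurableSet_image) n
    refine (measure_inter_conull ?_).trans hn
    rw [← preimage_compl, ← Measure.map_apply (h n).measurable hDmeas.compl,
      prob_compl_eq_zero_iff hDmeas, measure_disjointed_of_null hD, hDn]
  refine le_antisymm prob_le_one ?_
  calc 1 = μ (embeddingPieces E Φ n) := by
        rw [embeddingPieces, measure_disjointed_of_null fun m hm =>
          measure_mono_null inter_subset_left (hE m hm), hC]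
    _ ≤ μ (⋃ k, embeddingPieces E Φ k) := measure_mono (subset_iUnion _ n)

end EmbeddingPieces

theorem Filter.Tendsto.exists_first_lt {α : Type*} [TopologicalSpace α] [LinearOrder α]
    [OrderTopology α] {u : ℕ → α} {a x : α} (hu : Tendsto u atTop (nhds a)) (hx : x < a) :
    ∃ n, x < u n ∧ ∀ m < n, u m ≤ x := by
  classical
  have hex : ∃ n, x < u n := (hu.eventually (lt_mem_nhds hx)).exists
  exact ⟨Nat.find hex, Nat.find_spec hex, fun m hm => not_lt.1 (Nat.find_min hex hm)⟩

noncomputable def IsBorelSystem.measurableEquiv {X : Type*} [MeasurableSpace X] {T : X → X}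
    (hX : IsBorelSystem X T) : X ≃ᵐ X where
  toEquiv := Equiv.ofBijective T hX.bij
  measurable_toFun := hX.meas
  measurable_invFun s hs := by
    rw [← Equiv.image_eq_preimage_symm]
    exact hX.image_meas s hs

theorem isSlice_iUnion_embeddingPieces {X Y : Type*} [MeasurableSpace X] [MeasurableSpace Y]
    [StandardBorelSpace X] [StandardBorelSpace Y] (e : X ≃ᵐ X) {S : Y → Y} (hS : Measurable S)
    (hSi : Injective S) {t : ℝ} {s : ℕ → ℝ} (hst : ∀ n, s n ≤ t) (hs : Tendsto s atTop (nhds t))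
    {A : ℕ → Set X} (hA : ∀ n, IsSlice e (s n) (A n)) {Φ : ℕ → X → Y}
    (hE : ∀ n, IsEquivariantEmbeddingOn e S (orbitCore e (A n)) (Φ n)) :
    IsSlice e t (⋃ n, embeddingPieces (fun n => orbitCore e (A n)) Φ n) := by
  refine ⟨.iUnion (measurableSet_embeddingPieces hE), fun μ hμ => ⟨fun hlt => ?_, fun hge => ?_⟩⟩
  · have := hμ.1
    obtain ⟨n, hn, hmin⟩ :=
      ((ENNReal.continuous_ofReal.tendsto t).comp hs).exists_first_lt hlt
    refine measure_iUnion_embeddingPieces_eq_one e.measurable e.surjective hS hSi hE hμ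
      (measure_orbitCore_eq_one e hμ.2.toMeasurePreserving (hA n).1 (((hA n).2 μ hμ).1 hn))
      fun m hm μ' hμ' hμ'E => (lt_of_lt_of_le ?_ (hmin m hm)).ne
    have := hμ'.1
    have hAm : μ' (A m) = 1 := le_antisymm prob_le_one (hμ'E ▸ measure_mono (orbitCore_subset e))
    exact lt_of_not_ge fun hge => by simp [((hA m).2 μ' hμ').2 hge] at hAm
  · exact measure_iUnion_null fun n => measure_mono_null
      ((embeddingPieces_subset n).trans (orbitCore_subset e))
      (((hA n).2 μ hμ).2 ((ENNReal.ofReal_le_ofReal (hst n)).trans hge))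

theorem slice_embeds_of_smaller_slices_embed_general
    {X Y : Type*} [MeasurableSpace X] [MeasurableSpace Y]
    (T : X → X) (S : Y → Y) (hX : IsBorelSystem X T) (hY : IsBorelSystem Y S)
    (t : ℝ)
    (h : ∀ s : ℝ, s < t → ∃ (A : Set X) (φ : X → Y), IsSlice T s A ∧
      Set.InjOn φ A ∧ Measurable (A.restrict φ) ∧ ∀ x ∈ A, φ (T x) = S (φ x)) :
    ∃ (A : Set X) (φ : X → Y), IsSlice T t A ∧
      Set.InjOn φ A ∧ Measurable (A.restrict φ) ∧ ∀ x ∈ A, φ (T x) = S (φ x) := by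
  have := hX.std
  have := hY.std
  have := hY.unc
  let e := hX.measurableEquiv
  obtain ⟨s, -, hst, hs⟩ := exists_seq_strictMono_tendsto t
  choose A φ hA hφinj hφ hφS using fun n => h (s n) (hst n)
  choose Φ hΦ hΦφ using fun n => exists_measurable_eqOn_of_measurable_domRestrict (hA n).1 (hφ n)
  have hE (n : ℕ) : IsEquivariantEmbeddingOn T S (orbitCore e (A n)) (Φ n) :=
    isEquivariantEmbeddingOn_orbitCore e (hA n).1 (hΦ n) (hΦφ n) (hφinj n) (hφS n)
  obtain ⟨ψ, hψ, hψinj, hψS⟩ :=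
    exists_measurable_injOn_iUnion_embeddingPieces hX.bij.2 hY.bij.1 hE
  exact ⟨_, ψ, isSlice_iUnion_embeddingPieces e hY.meas hY.bij.1 (fun n => (hst n).le) hs hA hE,
    hψinj, hψ.comp measurable_subtype_coe, hψS⟩

/-- If for each `s < t` some `s`-slice of `(X,T)` embeds into
`(Y,S)` by a Borel injection, then some `t`-slice of `(X,T)` embeds into
`(Y,S)` by a Borel injection. -/
theorem slice_embeds_of_smaller_slices_embed
    {X Y : Type*} [MeasurableSpace X] [MeasurableSpace Y]
    (T : X → X) (S : Y → Y) (hX : IsBorelSystem X T) (hY : IsBorelSystem Y S)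
    (t : ℝ) (ht : 0 < t)
    (h : ∀ s : ℝ, s < t → ∃ (A : Set X) (φ : X → Y), IsSlice T s A ∧
      Set.InjOn φ A ∧ Measurable (A.restrict φ) ∧ ∀ x ∈ A, φ (T x) = S (φ x)) :
    ∃ (A : Set X) (φ : X → Y), IsSlice T t A ∧
      Set.InjOn φ A ∧ Measurable (A.restrict φ) ∧ ∀ x ∈ A, φ (T x) = S (φ x) :=
  slice_embeds_of_smaller_slices_embed_general T S hX hY t h
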